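/- For n ≥ 0, B_n^{(k)}(x) = Σ_{j=0}^{n} [Σ_{m=0}^{n-j} ((-1)^{n-m-j}/(m+1)^k) C(n,j) m! S₂(n-j,m)] x^j. -/

import Mathlib

open PowerSeries Finset

/-- e^{xt} as a formal power series. -/
noncomputable def expX (x : ℂ) : PowerSeries ℂ := rescale x (exp ℂ)

/-- 1 - e^{-t} as a formal power series. -/
noncomputable def oneSubExpNeg : PowerSeries ℂ := 1 - rescale (-1) (exp ℂ)

/-- Li_k(1-e^{-t}) = Σ_{m≥1} (1-e^{-t})^m / m^k as a formal power series. -/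
noncomputable def polyLogC (k : ℤ) : PowerSeries ℂ :=
  mk fun n => ∑ m ∈ Finset.Icc 1 n, (coeff n (oneSubExpNeg ^ m)) * ((m : ℂ) ^ k)⁻¹

/-- integer power of a power series (inverse via `PowerSeries.inv`). -/
noncomputable def zpowS (f : PowerSeries ℂ) (r : ℤ) : PowerSeries ℂ :=
  f ^ r.toNat * (f⁻¹) ^ (-r).toNat

/-- (1-λ)/(e^t-λ). -/
noncomputable def feBase (l : ℂ) : PowerSeries ℂ :=
  C (1 - l) * (exp ℂ - C l)⁻¹

/-- exponential generating function Σ f(n) t^n/n!. -/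
noncomputable def GF (f : ℕ → ℂ) : PowerSeries ℂ := mk fun n => f n / n.factorial

/-- Stirling numbers of the second kind: (e^t-1)^m = m! Σ_l S2(l,m) t^l/l!. -/
noncomputable def S2 (n m : ℕ) : ℂ :=
  (n.factorial : ℂ) / (m.factorial : ℂ) * coeff n ((exp ℂ - 1) ^ m)

/-!
Put `u = 1 - e^{-t}`. As power series, `Li_k(u) = u · L(u)` with `L(u) = ∑ u^m / (m + 1)^k`, so
the generating identity becomes `u · ∑ B_n(x) t^n/n! = u · L(u) · e^{xt}`, and `u ≠ 0` cancels in
the domain `ℂ⟦X⟧`. Since `u^m = (-1)^m (e^{-t} - 1)^m`, the coefficients of `u^m` are signed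
Stirling numbers, and the Cauchy product with `e^{xt}` produces the binomial coefficients.
-/

namespace PowerSeries

variable {R : Type*} [CommRing R] {f : R⟦X⟧}

theorem coeff_pow_eq_zero_of_lt (hf : constantCoeff f = 0) {n d : ℕ} (h : n < d) :
    coeff n (f ^ d) = 0 :=
  coeff_of_lt_order n <| (Nat.cast_lt.mpr h).trans_le (le_order_pow_of_constantCoeff_eq_zero d hf)

theorem coeff_subst_eq_sum_range (hf : constantCoeff f = 0) (g : R⟦X⟧) (n : ℕ) :
    coeff n (g.subst f) = ∑ d ∈ range (n + 1), coeff d g * coeff n (f ^ d) := by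
  rw [coeff_subst' (HasSubst.of_constantCoeff_zero' hf)]
  refine finsum_eq_sum_of_support_subset _ fun d hd => ?_
  rw [coe_range, Set.mem_Iio, Nat.lt_succ_iff]
  by_contra! h
  exact hd (by simp only [coeff_pow_eq_zero_of_lt hf h, smul_zero])

end PowerSeries

theorem neg_one_pow_sub_eq_pow_add {R : Type*} [Monoid R] [HasDistribNeg R] {m n : ℕ} (h : m ≤ n) :
    (-1 : R) ^ (n - m) = (-1) ^ (n + m) := by
  rw [show n + m = n - m + 2 * m by omega, pow_add, pow_mul, neg_one_sq, one_pow, mul_one]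

/-- `Li_k(u) / u = ∑ u^m / (m + 1)^k`. -/
noncomputable def polylogDivX (k : ℤ) : ℂ⟦X⟧ := mk fun m => (((m : ℂ) + 1) ^ k)⁻¹

lemma oneSubExpNeg_eq : oneSubExpNeg = -rescale (-1) (exp ℂ - 1) := by
  rw [oneSubExpNeg, map_sub, map_one]
  ring

lemma constantCoeff_oneSubExpNeg : constantCoeff oneSubExpNeg = 0 := by
  rw [← coeff_zero_eq_constantCoeff_apply, oneSubExpNeg, map_sub, coeff_rescale, coeff_exp]
  simp

lemma oneSubExpNeg_ne_zero : oneSubExpNeg ≠ 0 := by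
  intro h
  simpa [oneSubExpNeg, coeff_rescale, coeff_exp] using congrArg (coeff 1) h

lemma polyLogC_eq_subst (k : ℤ) : polyLogC k = (X * polylogDivX k).subst oneSubExpNeg := by
  ext n
  rw [coeff_subst_eq_sum_range constantCoeff_oneSubExpNeg, sum_range_succ', coeff_zero_X_mul,
    zero_mul, add_zero, ← Nat.Ico_zero_eq_range]
  simp only [polyLogC, polylogDivX, coeff_mk, coeff_succ_X_mul]
  rw [show Icc 1 n = Ico (0 + 1) (n + 1) from rfl,
    ← sum_Ico_add' (fun m : ℕ => coeff n (oneSubExpNeg ^ m) * ((m : ℂ) ^ k)⁻¹)]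
  simp [mul_comm]

lemma polyLogC_eq_mul_subst (k : ℤ) :
    polyLogC k = oneSubExpNeg * (polylogDivX k).subst oneSubExpNeg := by
  have hf := HasSubst.of_constantCoeff_zero' constantCoeff_oneSubExpNeg
  rw [polyLogC_eq_subst, subst_mul hf, subst_X hf]

lemma coeff_oneSubExpNeg_pow (l m : ℕ) :
    coeff l (oneSubExpNeg ^ m) = (-1) ^ (l + m) * m.factorial * S2 l m / l.factorial := by
  have hsign : (-1 : ℂ⟦X⟧) ^ m = C ((-1) ^ m) := by simp
  rw [oneSubExpNeg_eq, neg_pow, hsign, ← map_pow, coeff_C_mul, coeff_rescale, S2]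
  have := l.factorial_ne_zero
  have := m.factorial_ne_zero
  field_simp
  ring

lemma coeff_expX (x : ℂ) (n : ℕ) : coeff n (expX x) = x ^ n / n.factorial := by
  simp [expX, coeff_rescale, coeff_exp, div_eq_mul_inv, mul_comm]

lemma coeff_subst_polylogDivX (k : ℤ) (l : ℕ) :
    coeff l ((polylogDivX k).subst oneSubExpNeg) =
      (∑ m ∈ range (l + 1), (-1) ^ (l - m) * (((m : ℂ) + 1) ^ k)⁻¹ * m.factorial * S2 l m) /
        l.factorial := by
  rw [coeff_subst_eq_sum_range constantCoeff_oneSubExpNeg, sum_div]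
  refine sum_congr rfl fun m hm => ?_
  rw [polylogDivX, coeff_mk, coeff_oneSubExpNeg_pow,
    neg_one_pow_sub_eq_pow_add (Nat.lt_succ_iff.mp (mem_range.mp hm))]
  ring

lemma GF_injective : Function.Injective GF := fun f g h => funext fun n => by
  simpa [GF, n.factorial_ne_zero] using congrArg (coeff n) h

lemma subst_polylogDivX_mul_expX (k : ℤ) (x : ℂ) :
    (polylogDivX k).subst oneSubExpNeg * expX x = GF (fun n => ∑ j ∈ range (n + 1),
      (∑ m ∈ range (n - j + 1), (-1 : ℂ) ^ (n - m - j) * (((m : ℂ) + 1) ^ k)⁻¹ *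
        (n.choose j : ℂ) * (m.factorial : ℂ) * S2 (n - j) m) * x ^ j) := by
  ext n
  rw [mul_comm, coeff_mul, Nat.sum_antidiagonal_eq_sum_range_succ_mk, GF, coeff_mk, sum_div]
  refine sum_congr rfl fun j hj => ?_
  have hjn : j ≤ n := Nat.lt_succ_iff.mp (mem_range.mp hj)
  dsimp only
  rw [coeff_expX, coeff_subst_polylogDivX, mul_comm, div_mul_div_comm, sum_mul, sum_mul, sum_div,
    sum_div]
  refine sum_congr rfl fun m _ => ?_
  rw [Nat.cast_choose ℂ hjn, Nat.sub_right_comm]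
  have := j.factorial_ne_zero
  have := (n - j).factorial_ne_zero
  have := n.factorial_ne_zero
  field_simp

theorem stmt16 (k : ℤ) (B : ℕ → ℂ → ℂ)
    (hB : ∀ x : ℂ, oneSubExpNeg * GF (fun n => B n x) = polyLogC (k) * expX x) :
    ∀ (n : ℕ) (x : ℂ),
      B n x = ∑ j ∈ range (n + 1),
        (∑ m ∈ range (n - j + 1), (-1 : ℂ) ^ (n - m - j) * (((m : ℂ) + 1) ^ k)⁻¹ *
          (n.choose j : ℂ) * (m.factorial : ℂ) * S2 (n - j) m) * x ^ j := by
  intro n x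
  have hGF := hB x
  rw [polyLogC_eq_mul_subst, mul_assoc, subst_polylogDivX_mul_expX] at hGF
  exact congrFun (GF_injective (mul_left_cancel₀ oneSubExpNeg_ne_zero hGF)) n
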